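/- Let ℓ ≥ 2 be an integer, τ ≥ 1, Δ > 0, and let 0 = τ_1 < τ_2 < … < τ_ℓ ≤ τ be pairwise distinct reals. Set h_i := −τ_i·Δ, and let (A_1, …, A_ℓ, B_1, …, B_ℓ) be the unique solution of U_{2ℓ}(h)·(A; B)ᵀ = (0, …, 0, (2ℓ−1)!)ᵀ. Let z_1, …, z_ℓ ∈ ℂ with |z_j| = 1, and define u ∈ ℂ^{2ℓ} by u_j := Δ^{2ℓ−1}·A_j and u_{ℓ+j} := Δ^{2ℓ−1}·2πi·z_j·B_j for 1 ≤ j ≤ ℓ. Then ‖u‖₂ ≥ (2ℓ−1)! / (4·ℓ³·τ^{2ℓ−1}). -/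

import Mathlib

/-!
Row `k` of the system says that the functional `L p = ∑ⱼ (Aⱼ p(hⱼ) + Bⱼ p'(hⱼ))` takes the value
`(2ℓ-1)! [k = 2ℓ-1]` on `Xᵏ`, so `L p = (2ℓ-1)! · coeff_{2ℓ-1} p` whenever `deg p < 2ℓ`. Take
`Q = ∏_{j ≠ 1} (X - hⱼ)` and the monic `p = (X - c) Q²` of degree `2ℓ-1`, with `c` chosen so that
`p'(h₁) = 0`. Then `p` and `p'` vanish at every other node and `L p = A₁ p(h₁)`, which gives
`|A₁| = 2 (2ℓ-1)! Q'(h₁) / Q(h₁)³`. With `rⱼ = h₁ - hⱼ ∈ (0, τΔ]`, `Q(h₁) = ∏ rⱼ ≤ τΔ · Q'(h₁)` and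
`Q(h₁)² ≤ (τΔ)^{2ℓ-2}`, hence `‖u‖₂ ≥ Δ^{2ℓ-1} |A₁| ≥ 2 (2ℓ-1)! / τ^{2ℓ-1}`.
-/

open scoped BigOperators

/-- The square `2ℓ × 2ℓ` confluent Vandermonde matrix `U_{2ℓ}(h)`: rows `k = 0, …, 2ℓ-1`,
entry `h_j^k` in column `j` and `k h_j^{k-1}` in column `ℓ + j`. -/
noncomputable def U2l (ℓ : ℕ) (h : Fin ℓ → ℝ) : Matrix (Fin (2 * ℓ)) (Fin ℓ ⊕ Fin ℓ) ℂ :=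
  fun k => Sum.elim (fun j => ((h j : ℂ)) ^ (k : ℕ))
    (fun j => ((k : ℕ) : ℂ) * ((h j : ℂ)) ^ ((k : ℕ) - 1))

/-- The right-hand side `(0, …, 0, (2ℓ-1)!)ᵀ` of the finite-difference linear system. -/
noncomputable def fdRhs (ℓ : ℕ) : Fin (2 * ℓ) → ℂ :=
  fun k => if (k : ℕ) = 2 * ℓ - 1 then ((2 * ℓ - 1).factorial : ℂ) else 0

/-- The discrete ℓ² norm of a vector. -/
noncomputable def l2norm {n : Type*} [Fintype n] (v : n → ℂ) : ℝ :=
  Real.sqrt (∑ i, ‖v i‖ ^ 2)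

open Polynomial Finset

section HermiteTestPoly

variable {K : Type*} [Field K] (Q : K[X]) (x : K)

/-- `(X - c) Q²`, with `c` chosen so that `x` is a critical point whenever `Q'(x) ≠ 0`. -/
noncomputable def hermiteTestPoly : K[X] :=
  (X - C (x + Q.eval x / (2 * (derivative Q).eval x))) * Q ^ 2

theorem eval_hermiteTestPoly_self :
    (hermiteTestPoly Q x).eval x = -(Q.eval x ^ 3 / (2 * (derivative Q).eval x)) := by
  simp only [hermiteTestPoly, eval_mul, eval_sub, eval_X, eval_C, eval_pow]
  ring

theorem eval_derivative_hermiteTestPoly_self [NeZero (2 : K)] (hQ : (derivative Q).eval x ≠ 0) :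
    (derivative (hermiteTestPoly Q x)).eval x = 0 := by
  simp only [hermiteTestPoly, derivative_mul, derivative_sub, derivative_X, derivative_C,
    derivative_pow, eval_add, eval_mul, eval_sub, eval_X, eval_C, eval_pow, eval_one, eval_zero]
  field_simp
  ring

variable {Q x} {y : K}

theorem eval_hermiteTestPoly_of_isRoot (hy : Q.IsRoot y) : (hermiteTestPoly Q x).eval y = 0 := by
  simp [hermiteTestPoly, hy.eq_zero]

theorem eval_derivative_hermiteTestPoly_of_isRoot (hy : Q.IsRoot y) :
    (derivative (hermiteTestPoly Q x)).eval y = 0 := by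
  simp [hermiteTestPoly, derivative_mul, derivative_pow, hy.eq_zero]

theorem Polynomial.Monic.hermiteTestPoly (hQ : Q.Monic) : (hermiteTestPoly Q x).Monic :=
  (monic_X_sub_C _).mul (hQ.pow 2)

theorem natDegree_hermiteTestPoly (hQ : Q.Monic) :
    (hermiteTestPoly Q x).natDegree = 2 * Q.natDegree + 1 := by
  rw [hermiteTestPoly, (monic_X_sub_C _).natDegree_mul (hQ.pow 2), natDegree_X_sub_C,
    natDegree_pow]
  ring

end HermiteTestPoly

theorem eval_derivative_prod_X_sub_C {R ι : Type*} [CommRing R] [DecidableEq ι] (s : Finset ι)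
    (a : ι → R) (x : R) :
    (derivative (∏ j ∈ s, (X - C (a j)))).eval x = ∑ k ∈ s, ∏ j ∈ s.erase k, (x - a j) := by
  simp [derivative_prod_finset, eval_finsetSum, eval_prod]

theorem prod_pow_three_le_sum_prod_erase_mul {ι : Type*} [DecidableEq ι] {s : Finset ι}
    {r : ι → ℝ} {R : ℝ} (hs : s.Nonempty) (hr0 : ∀ j ∈ s, 0 ≤ r j) (hrR : ∀ j ∈ s, r j ≤ R) :
    (∏ j ∈ s, r j) ^ 3 ≤ (∑ k ∈ s, ∏ j ∈ s.erase k, r j) * R ^ (2 * #s + 1) := by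
  obtain ⟨k, hk⟩ := hs
  have hR : 0 ≤ R := (hr0 k hk).trans (hrR k hk)
  have hP : 0 ≤ ∏ j ∈ s, r j := prod_nonneg hr0
  have herase (k : ι) : 0 ≤ ∏ j ∈ s.erase k, r j :=
    prod_nonneg fun j hj => hr0 j (mem_of_mem_erase hj)
  have hprod_le_mul_sum : ∏ j ∈ s, r j ≤ R * ∑ k ∈ s, ∏ j ∈ s.erase k, r j :=
    calc ∏ j ∈ s, r j = r k * ∏ j ∈ s.erase k, r j := (mul_prod_erase s r hk).symm
      _ ≤ R * ∏ j ∈ s.erase k, r j := mul_le_mul_of_nonneg_right (hrR k hk) (herase k)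
      _ ≤ R * ∑ k ∈ s, ∏ j ∈ s.erase k, r j :=
        mul_le_mul_of_nonneg_left (single_le_sum (fun k _ => herase k) hk) hR
  have hprod_le_pow : ∏ j ∈ s, r j ≤ R ^ #s := by
    simpa using prod_le_prod hr0 hrR
  calc (∏ j ∈ s, r j) ^ 3 = (∏ j ∈ s, r j) * (∏ j ∈ s, r j) ^ 2 := by ring
    _ ≤ (R * ∑ k ∈ s, ∏ j ∈ s.erase k, r j) * (R ^ #s) ^ 2 :=
      mul_le_mul hprod_le_mul_sum (pow_le_pow_left₀ hP hprod_le_pow 2) (by positivity)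
        (hP.trans hprod_le_mul_sum)
    _ = (∑ k ∈ s, ∏ j ∈ s.erase k, r j) * R ^ (2 * #s + 1) := by ring

theorem norm_le_l2norm {n : Type*} [Fintype n] (v : n → ℂ) (i : n) : ‖v i‖ ≤ l2norm v :=
  Real.le_sqrt_of_sq_le (single_le_sum (f := fun i => ‖v i‖ ^ 2) (fun _ _ => by positivity)
    (mem_univ i))

section ConfluentVandermonde

variable {ℓ : ℕ} {h : Fin ℓ → ℝ} {A B : Fin ℓ → ℂ}

theorem sum_weight_eval_eq_coeff_mul_factorial
    (hAB : (U2l ℓ h).mulVec (Sum.elim A B) = fdRhs ℓ) {p : ℂ[X]} (hp : p.natDegree < 2 * ℓ) :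
    ∑ j, (A j * p.eval (h j : ℂ) + B j * (derivative p).eval (h j : ℂ)) =
      p.coeff (2 * ℓ - 1) * (2 * ℓ - 1).factorial := by
  let L : ℂ[X] →ₗ[ℂ] ℂ := ∑ j, (A j • leval (h j : ℂ) + B j • leval (h j : ℂ) ∘ₗ derivative)
  have hL (q : ℂ[X]) :
      L q = ∑ j, (A j * q.eval (h j : ℂ) + B j * (derivative q).eval (h j : ℂ)) := by
    simp [L]
  have hmonomial (k : Fin (2 * ℓ)) (c : ℂ) : L (monomial k c) = c * fdRhs ℓ k := by
    rw [← hAB, ← C_mul_X_pow_eq_monomial, ← smul_eq_C_mul, map_smul, smul_eq_mul, hL]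
    simp [Matrix.mulVec, dotProduct, U2l, Fintype.sum_sum_type, Finset.sum_add_distrib, mul_comm,
      derivative_X_pow]
  rw [← hL]
  conv_lhs => rw [p.as_sum_range' _ hp]
  rw [map_sum, ← Fin.sum_univ_eq_sum_range (fun k => L (monomial k _))]
  simp only [hmonomial]
  rw [Finset.sum_eq_single ⟨2 * ℓ - 1, by omega⟩] <;> simp +contextual [fdRhs, Fin.ext_iff]

theorem weight_mul_eq_factorial (hAB : (U2l ℓ h).mulVec (Sum.elim A B) = fdRhs ℓ) (i : Fin ℓ)
    (hS : ∑ k ∈ univ.erase i, ∏ j ∈ (univ.erase i).erase k, (h i - h j) ≠ 0) :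
    A i * ((-((∏ j ∈ univ.erase i, (h i - h j)) ^ 3 /
      (2 * ∑ k ∈ univ.erase i, ∏ j ∈ (univ.erase i).erase k, (h i - h j))) : ℝ) : ℂ) =
      (2 * ℓ - 1).factorial := by
  have hℓ := i.pos
  set Q : ℝ[X] := ∏ j ∈ univ.erase i, (X - C (h j))
  have hQ : Q.Monic := monic_prod_of_monic _ _ fun j _ => monic_X_sub_C _
  have hdeg : (hermiteTestPoly Q (h i)).natDegree = 2 * ℓ - 1 := by
    rw [natDegree_hermiteTestPoly hQ, natDegree_prod_of_monic _ _ fun j _ => monic_X_sub_C _]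
    simp only [natDegree_X_sub_C, sum_const, smul_eq_mul, mul_one, card_erase_of_mem (mem_univ i),
      card_univ, Fintype.card_fin]
    omega
  have hQ' : (derivative Q).eval (h i) ≠ 0 := by rwa [eval_derivative_prod_X_sub_C]
  have hQi : Q.eval (h i) = ∏ j ∈ univ.erase i, (h i - h j) := by simp [Q, eval_prod]
  have hroot (j : Fin ℓ) (hj : j ≠ i) : Q.IsRoot (h j) := by
    simp [Q, eval_prod, prod_eq_zero (mem_erase.2 ⟨hj, mem_univ j⟩)]
  have key := sum_weight_eval_eq_coeff_mul_factorial hAB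
    (p := (hermiteTestPoly Q (h i)).map (algebraMap ℝ ℂ)) (by rw [natDegree_map]; omega)
  have heval (q : ℝ[X]) (x : ℝ) : (q.map (algebraMap ℝ ℂ)).eval (x : ℂ) = ((q.eval x : ℝ) : ℂ) := by
    rw [eval_map_algebraMap]
    exact aeval_algebraMap_apply_eq_algebraMap_eval x q
  have hlead : (hermiteTestPoly Q (h i)).coeff (2 * ℓ - 1) = 1 :=
    hdeg ▸ hQ.hermiteTestPoly.coeff_natDegree
  simp only [derivative_map, heval, coeff_map, hlead, map_one, one_mul] at key
  rw [sum_eq_single i] at key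
  · rwa [eval_derivative_hermiteTestPoly_self _ _ hQ', eval_hermiteTestPoly_self,
      eval_derivative_prod_X_sub_C, Complex.ofReal_zero, mul_zero, add_zero, hQi] at key
  · intro j _ hj
    rw [eval_hermiteTestPoly_of_isRoot (hroot j hj),
      eval_derivative_hermiteTestPoly_of_isRoot (hroot j hj)]
    simp
  · simp

theorem two_mul_factorial_div_le_norm_weight
    (hAB : (U2l ℓ h).mulVec (Sum.elim A B) = fdRhs ℓ) (hℓ : 2 ≤ ℓ) (i : Fin ℓ) {R : ℝ}
    (hlt : ∀ j ≠ i, h j < h i) (hR : ∀ j, h i - h j ≤ R) :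
    2 * (2 * ℓ - 1).factorial / R ^ (2 * ℓ - 1) ≤ ‖A i‖ := by
  set s := univ.erase i
  have hcard : #s = ℓ - 1 := by simp [s]
  have hs : s.Nonempty := card_pos.1 (by omega)
  have hr (j : Fin ℓ) (hj : j ∈ s) : 0 < h i - h j := sub_pos.2 (hlt j (ne_of_mem_erase hj))
  set P := ∏ j ∈ s, (h i - h j)
  set S := ∑ k ∈ s, ∏ j ∈ s.erase k, (h i - h j)
  have hP : 0 < P := prod_pos hr
  have hS : 0 < S := sum_pos (fun k _ => prod_pos fun j hj => hr j (mem_of_mem_erase hj)) hs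
  have hRpos : 0 < R := (hr _ hs.choose_spec).trans_le (hR _)
  have hweight : ‖A i‖ * (P ^ 3 / S) = 2 * (2 * ℓ - 1).factorial := by
    have := congrArg norm (weight_mul_eq_factorial hAB i hS.ne')
    rw [norm_mul, Complex.norm_real, Real.norm_eq_abs, abs_neg, abs_of_pos (by positivity),
      Complex.norm_natCast] at this
    rw [← this]
    ring
  have hbound : P ^ 3 / S ≤ R ^ (2 * ℓ - 1) := by
    rw [div_le_iff₀ hS, mul_comm, show 2 * ℓ - 1 = 2 * #s + 1 by omega]
    exact prod_pow_three_le_sum_prod_erase_mul hs (fun j hj => (hr j hj).le) (fun j _ => hR j)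
  rw [div_le_iff₀ (pow_pos hRpos _), ← hweight]
  gcongr

end ConfluentVandermonde

/-- Lemma (lower bound for the candidate singular vector `u`): with `h_i = -τ_i Δ`,
`0 = τ_1 < … < τ_ℓ ≤ τ`, weights `(A; B)` solving `U_{2ℓ}(h)(A; B)ᵀ = (0, …, 0, (2ℓ-1)!)ᵀ`,
unimodular `z_j`, and `u_j = Δ^{2ℓ-1} A_j`, `u_{ℓ+j} = Δ^{2ℓ-1} 2πi z_j B_j`, one has
`‖u‖₂ ≥ (2ℓ-1)! / (4 ℓ³ τ^{2ℓ-1})`. -/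
theorem fd_vector_norm_lower_bound (ℓ : ℕ) (hℓ : 2 ≤ ℓ) (τ Δ : ℝ) (hΔ : 0 < Δ)
    (t : Fin ℓ → ℝ) (ht0 : t ⟨0, by omega⟩ = 0) (hmono : StrictMono t) (htτ : ∀ i, t i ≤ τ)
    (z : Fin ℓ → ℂ)
    (A B : Fin ℓ → ℂ)
    (hAB : (U2l ℓ (fun i => -(t i) * Δ)).mulVec (Sum.elim A B) = fdRhs ℓ) :
    ((2 * ℓ - 1).factorial : ℝ) / (4 * (ℓ : ℝ) ^ 3 * τ ^ (2 * ℓ - 1)) ≤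
      l2norm (Sum.elim
        (fun j : Fin ℓ => ((Δ : ℝ) : ℂ) ^ (2 * ℓ - 1) * A j)
        (fun j : Fin ℓ => ((Δ : ℝ) : ℂ) ^ (2 * ℓ - 1) *
          (2 * (Real.pi : ℂ) * Complex.I) * z j * B j)) := by
  set i₀ : Fin ℓ := ⟨0, by omega⟩
  set F : ℝ := ((2 * ℓ - 1).factorial : ℝ)
  have hτ : 0 ≤ τ := ht0 ▸ htτ i₀
  have hweight : 2 * F / (τ * Δ) ^ (2 * ℓ - 1) ≤ ‖A i₀‖ := by
    refine two_mul_factorial_div_le_norm_weight hAB hℓ i₀ (fun j hj => ?_) (fun j => ?_)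
    · have : t i₀ < t j := hmono (Fin.lt_def.2 (Nat.pos_of_ne_zero fun h0 => hj (Fin.ext h0)))
      simp only [ht0] at this ⊢
      nlinarith
    · simp only [ht0]
      nlinarith [htτ j]
  calc F / (4 * (ℓ : ℝ) ^ 3 * τ ^ (2 * ℓ - 1)) ≤ 2 * F / τ ^ (2 * ℓ - 1) := by
        rw [← div_div]
        gcongr
        rw [div_le_iff₀ (by positivity)]
        have : (1 : ℝ) ≤ ℓ := by exact_mod_cast (by omega : 1 ≤ ℓ)
        nlinarith [one_le_pow₀ (n := 3) this, show 0 ≤ F by positivity]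
    _ = Δ ^ (2 * ℓ - 1) * (2 * F / (τ * Δ) ^ (2 * ℓ - 1)) := by
        rw [mul_pow, ← div_div, mul_div_cancel₀ _ (by positivity)]
    _ ≤ Δ ^ (2 * ℓ - 1) * ‖A i₀‖ := by gcongr
    _ ≤ _ := by
        convert norm_le_l2norm _ (Sum.inl i₀)
        simp [abs_of_pos hΔ]
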